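/- For every positive integer n, ∑_{α ⊨ n+1} (g^α)^2 = ∑_{k=0}^{n} (C(n,k))^2 · ∑_{β ⊨ k} (g^β)^2, where the sums over α and β range over integer compositions of n+1 and of k respectively, and where the inner sum for k = 0 is interpreted as 1 (corresponding to the unique empty composition and the unique empty tableau). -/

import Mathlib

/-- The cells of a composition shape `α`: a cell `(i, j)` for each row index `i`
and each column index `j < α_i`. -/
abbrev ImmaculateCells {n : ℕ} (α : Composition n) : Type :=
  Σ i : Fin α.length, Fin (α.blocksFun i)

/-- A bijective filling `T` of the cells of shape `α` with `{1, …, n}` (modeled as `Fin n`)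
is a standard immaculate tableau if each row is (strictly) increasing from left to right
and the first column is strictly increasing. -/
def IsStandardImmaculate {n : ℕ} (α : Composition n) (T : ImmaculateCells α ≃ Fin n) : Prop :=
  (∀ (i : Fin α.length) (j j' : Fin (α.blocksFun i)), j < j' → T ⟨i, j⟩ < T ⟨i, j'⟩) ∧
  (∀ i i' : Fin α.length, i < i' →
    T ⟨i, ⟨0, α.one_le_blocksFun i⟩⟩ < T ⟨i', ⟨0, α.one_le_blocksFun i'⟩⟩)

/-- `g α` is the number of standard immaculate tableaux of shape `α`. -/
noncomputable def g {n : ℕ} (α : Composition n) : ℕ :=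
  Nat.card {T : ImmaculateCells α ≃ Fin n // IsStandardImmaculate α T}

open Finset

lemma card_cells {n : ℕ} (α : Composition n) : Fintype.card (ImmaculateCells α) = n := by
  rw [Fintype.card_sigma]
  simp only [Fintype.card_fin]
  exact α.sum_blocksFun

def consComp (a : ℕ) {k : ℕ} (β : Composition k) : Composition (a + 1 + k) where
  blocks := (a + 1) :: β.blocks
  blocks_pos := by
    intro i hi
    rcases List.mem_cons.1 hi with h | h
    · omega
    · exact β.blocks_pos h
  blocks_sum := by simp [β.blocks_sum]

lemma consComp_length (a : ℕ) {k : ℕ} (β : Composition k) :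
    (consComp a β).length = β.length + 1 := rfl

lemma compl_card {a k : ℕ} (S : Finset (Fin (a + k))) (hS : S.card = a) : Sᶜ.card = k := by
  rw [card_compl, hS, Fintype.card_fin]; omega

def iota (a k : ℕ) (x : Fin (a + k)) : Fin (a + 1 + k) :=
  ⟨x.val + 1, by have := x.isLt; omega⟩

def z (a k : ℕ) : Fin (a + 1 + k) := ⟨0, by omega⟩

lemma iota_strictMono (a k : ℕ) : StrictMono (iota a k) := fun x y h => by
  simp only [iota, Fin.mk_lt_mk]; exact Nat.succ_lt_succ h

lemma iota_ne_z (a k : ℕ) (x : Fin (a + k)) : iota a k x ≠ z a k := by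
  simp [iota, z, Fin.ext_iff]

lemma z_lt_iota (a k : ℕ) (x : Fin (a + k)) : z a k < iota a k x := by
  simp [iota, z, Fin.lt_def]

lemma iota_injective (a k : ℕ) : Function.Injective (iota a k) :=
  (iota_strictMono a k).injective

variable {a k : ℕ} {β : Composition k}

noncomputable def fwd (S : Finset (Fin (a + k))) (hS : S.card = a)
    (T' : ImmaculateCells β ≃ Fin k) :
    ImmaculateCells (consComp a β) → Fin (a + 1 + k) :=
  fun c =>
    Fin.cases
      (motive := fun i : Fin (β.length + 1) =>
        Fin ((consComp a β).blocksFun i) → Fin (a + 1 + k))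
      (fun j => Fin.cases (z a k)
        (fun j' => iota a k (S.orderEmbOfFin hS j')) j)
      (fun i j => iota a k ((Sᶜ).orderEmbOfFin (compl_card S hS) (T' ⟨i, j⟩)))
      c.1 c.2

lemma fwd_zero (S : Finset (Fin (a + k))) (hS : S.card = a)
    (T' : ImmaculateCells β ≃ Fin k) (h0 : (0:ℕ) < β.length + 1) (h0' : (0:ℕ) < a + 1) :
    fwd S hS T' ⟨⟨0, h0⟩, ⟨0, h0'⟩⟩ = z a k := rfl

lemma fwd_row0 (S : Finset (Fin (a + k))) (hS : S.card = a)
    (T' : ImmaculateCells β ≃ Fin k) (h0 : (0:ℕ) < β.length + 1)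
    (j : ℕ) (hj : j + 1 < a + 1) :
    fwd S hS T' ⟨⟨0, h0⟩, ⟨j + 1, hj⟩⟩ =
      iota a k (S.orderEmbOfFin hS ⟨j, by omega⟩) := rfl

lemma fwd_row (S : Finset (Fin (a + k))) (hS : S.card = a)
    (T' : ImmaculateCells β ≃ Fin k) (i : ℕ) (hi : i + 1 < β.length + 1)
    (j : Fin ((consComp a β).blocksFun ⟨i + 1, hi⟩)) :
    fwd S hS T' ⟨⟨i + 1, hi⟩, j⟩ =
      iota a k ((Sᶜ).orderEmbOfFin (compl_card S hS)
        (T' ⟨⟨i, by omega⟩, ⟨j.val, j.isLt⟩⟩)) := rfl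

lemma fwd_injective (S : Finset (Fin (a + k))) (hS : S.card = a)
    (T' : ImmaculateCells β ≃ Fin k) : Function.Injective (fwd S hS T') := by
  rintro ⟨⟨i, hi⟩, ⟨jv, hj⟩⟩ ⟨⟨i', hi'⟩, ⟨jv', hj'⟩⟩ h
  cases i with
  | zero =>
    cases i' with
    | zero =>
      cases jv with
      | zero =>
        cases jv' with
        | zero => rfl
        | succ j' => exact absurd h.symm (iota_ne_z a k _)
      | succ j =>
        cases jv' with
        | zero => exact absurd h (iota_ne_z a k _)
        | succ j' =>
          have h2 := (S.orderEmbOfFin hS).injective (iota_injective a k h)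
          have : j = j' := by simpa [Fin.ext_iff] using h2
          subst this; rfl
    | succ i' =>
      cases jv with
      | zero => exact absurd h (by exact fun hh => iota_ne_z a k _ hh.symm)
      | succ j =>
        have h2 := iota_injective a k h
        have hmem := S.orderEmbOfFin_mem hS ⟨j, Nat.lt_of_succ_lt_succ hj⟩
        have hmem' := (Sᶜ).orderEmbOfFin_mem (compl_card S hS)
          (T' ⟨⟨i', Nat.lt_of_succ_lt_succ hi'⟩, ⟨jv', hj'⟩⟩)
        rw [h2] at hmem
        exact absurd hmem (Finset.mem_compl.1 hmem')
  | succ i =>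
    cases i' with
    | zero =>
      cases jv' with
      | zero => exact absurd h (iota_ne_z a k _)
      | succ j' =>
        have h2 := iota_injective a k h
        have hmem := S.orderEmbOfFin_mem hS ⟨j', Nat.lt_of_succ_lt_succ hj'⟩
        have hmem' := (Sᶜ).orderEmbOfFin_mem (compl_card S hS)
          (T' ⟨⟨i, Nat.lt_of_succ_lt_succ hi⟩, ⟨jv, hj⟩⟩)
        rw [← h2] at hmem
        exact absurd hmem (Finset.mem_compl.1 hmem')
    | succ i' =>
      have h2 := T'.injective (((Sᶜ).orderEmbOfFin (compl_card S hS)).injective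
        (iota_injective a k h))
      
      obtain ⟨h3, h4⟩ := Sigma.mk.inj_iff.1 h2
      have hii : i = i' := by simpa [Fin.ext_iff] using h3
      subst hii
      have hjj : jv = jv' := by
        have := eq_of_heq h4
        exact congrArg Fin.val this
      subst hjj
      rfl

lemma fwd_bijective (S : Finset (Fin (a + k))) (hS : S.card = a)
    (T' : ImmaculateCells β ≃ Fin k) : Function.Bijective (fwd S hS T') :=
  (Fintype.bijective_iff_injective_and_card _).2
    ⟨fwd_injective S hS T', by rw [card_cells, Fintype.card_fin]⟩

lemma fwd_SIT (S : Finset (Fin (a + k))) (hS : S.card = a)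
    (T' : ImmaculateCells β ≃ Fin k) (hT' : IsStandardImmaculate β T') :
    IsStandardImmaculate (consComp a β) (Equiv.ofBijective _ (fwd_bijective S hS T')) := by
  constructor
  · rintro ⟨i, hi⟩ ⟨jv, hj⟩ ⟨jv', hj'⟩ hlt
    have hlt' : jv < jv' := hlt
    show fwd S hS T' ⟨⟨i, hi⟩, ⟨jv, hj⟩⟩ < fwd S hS T' ⟨⟨i, hi⟩, ⟨jv', hj'⟩⟩
    cases i with
    | zero =>
      cases jv' with
      | zero => omega
      | succ j' =>
        cases jv with
        | zero => exact z_lt_iota a k _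
        | succ j =>
          exact iota_strictMono a k ((S.orderEmbOfFin hS).strictMono (by
            show j < j'; omega))
    | succ i =>
      exact iota_strictMono a k (((Sᶜ).orderEmbOfFin (compl_card S hS)).strictMono
        (hT'.1 ⟨i, Nat.lt_of_succ_lt_succ hi⟩ ⟨jv, hj⟩ ⟨jv', hj'⟩ hlt'))
  · rintro ⟨i, hi⟩ ⟨i', hi'⟩ hlt
    have hlt' : i < i' := hlt
    show fwd S hS T' ⟨⟨i, hi⟩, ⟨0, _⟩⟩ < fwd S hS T' ⟨⟨i', hi'⟩, ⟨0, _⟩⟩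
    cases i with
    | zero =>
      cases i' with
      | zero => omega
      | succ i' => exact z_lt_iota a k _
    | succ i =>
      cases i' with
      | zero => omega
      | succ i' =>
        exact iota_strictMono a k (((Sᶜ).orderEmbOfFin (compl_card S hS)).strictMono
          (hT'.2 ⟨i, Nat.lt_of_succ_lt_succ hi⟩ ⟨i', Nat.lt_of_succ_lt_succ hi'⟩
            (by show i < i'; omega)))

noncomputable def phi (a k : ℕ) (β : Composition k) :
    ({S : Finset (Fin (a + k)) // S.card = a} ×
      {T' : ImmaculateCells β ≃ Fin k // IsStandardImmaculate β T'}) →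
    {T : ImmaculateCells (consComp a β) ≃ Fin (a + 1 + k) //
      IsStandardImmaculate (consComp a β) T} :=
  fun p => ⟨Equiv.ofBijective _ (fwd_bijective p.1.1 p.1.2 p.2.1),
    fwd_SIT p.1.1 p.1.2 p.2.1 p.2.2⟩

lemma mem_of_fwd_eq (S : Finset (Fin (a + k))) (hS : S.card = a)
    (T' : ImmaculateCells β ≃ Fin k)
    (S₂ : Finset (Fin (a + k))) (hS₂ : S₂.card = a)
    (T'₂ : ImmaculateCells β ≃ Fin k)
    (h : ∀ c, fwd S hS T' c = fwd S₂ hS₂ T'₂ c) {x : Fin (a + k)} (hx : x ∈ S) :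
    x ∈ S₂ := by
  have hr : x ∈ Set.range (S.orderEmbOfFin hS) := by
    rw [Finset.range_orderEmbOfFin]; exact hx
  obtain ⟨j, hj⟩ := hr
  have hcell := h ⟨⟨0, Nat.succ_pos _⟩, ⟨j.val + 1, Nat.succ_lt_succ j.isLt⟩⟩
  rw [fwd_row0, fwd_row0] at hcell
  have h2 := iota_injective a k hcell
  have hj' : S.orderEmbOfFin hS ⟨j.val, j.isLt⟩ = x := by
    convert hj using 2
  rw [hj'] at h2
  rw [h2]
  exact S₂.orderEmbOfFin_mem hS₂ _

lemma phi_injective : Function.Injective (phi a k β) := by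
  rintro ⟨⟨S, hS⟩, ⟨T', hT'⟩⟩ ⟨⟨S₂, hS₂⟩, ⟨T'₂, hT'₂⟩⟩ h
  have hfun : ∀ c, fwd S hS T' c = fwd S₂ hS₂ T'₂ c := by
    intro c
    have := congrArg Subtype.val h
    exact congrFun (congrArg (fun (e : ImmaculateCells (consComp a β) ≃ Fin (a+1+k)) =>
      (e : ImmaculateCells (consComp a β) → Fin (a+1+k))) this) c
  have hSeq : S = S₂ := by
    apply Finset.eq_of_subset_of_card_le
    · intro x hx; exact mem_of_fwd_eq S hS T' S₂ hS₂ T'₂ hfun hx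
    · rw [hS, hS₂]
  subst hSeq
  have hTeq : T' = T'₂ := by
    apply Equiv.ext
    rintro ⟨⟨i, hi⟩, ⟨jv, hj⟩⟩
    have hcell := hfun ⟨⟨i + 1, Nat.succ_lt_succ hi⟩, ⟨jv, hj⟩⟩
    rw [fwd_row, fwd_row] at hcell
    exact ((Sᶜ).orderEmbOfFin (compl_card S hS)).injective (iota_injective a k hcell)
  subst hTeq
  rfl

lemma cell_inj {n : ℕ} {γ : Composition n} {i i' jv jv' : ℕ}
    {hi : i < γ.length} {hi' : i' < γ.length}
    {hj : jv < γ.blocksFun ⟨i, hi⟩} {hj' : jv' < γ.blocksFun ⟨i', hi'⟩}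
    (h : (⟨⟨i, hi⟩, ⟨jv, hj⟩⟩ : ImmaculateCells γ) = ⟨⟨i', hi'⟩, ⟨jv', hj'⟩⟩) :
    i = i' ∧ jv = jv' := by
  obtain ⟨h1, h2⟩ := Sigma.mk.inj_iff.1 h
  have hii : i = i' := by simpa [Fin.ext_iff] using h1
  subst hii
  exact ⟨rfl, by simpa [Fin.ext_iff] using eq_of_heq h2⟩

def rowCell (j : ℕ) (hj : j < a + 1) : ImmaculateCells (consComp a β) :=
  ⟨⟨0, Nat.succ_pos _⟩, ⟨j, hj⟩⟩

def liftCell (c : ImmaculateCells β) : ImmaculateCells (consComp a β) :=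
  ⟨⟨c.1.val + 1, Nat.succ_lt_succ c.1.isLt⟩, ⟨c.2.val, c.2.isLt⟩⟩

lemma phi_surjective : Function.Surjective (phi a k β) := by
  rintro ⟨T, hT⟩
  have notlt : ∀ y : Fin (a + 1 + k), ¬ y < z a k := by
    intro y hy; simp [z, Fin.lt_def] at hy
  -- the entry at the top-left corner is 0
  have h00 : T (rowCell 0 (Nat.succ_pos a)) = z a k := by
    obtain ⟨c, hc⟩ : ∃ c, T c = z a k := ⟨T.symm _, T.apply_symm_apply _⟩
    obtain ⟨⟨i, hi⟩, ⟨jv, hj⟩⟩ := c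
    cases i with
    | zero =>
      cases jv with
      | zero => exact hc
      | succ j =>
        have h5 := hT.1 ⟨0, hi⟩ ⟨0, Nat.succ_pos _⟩ ⟨j + 1, hj⟩ (Nat.succ_pos j)
        rw [hc] at h5
        exact absurd h5 (notlt _)
    | succ i =>
      cases jv with
      | zero =>
        have h5 := hT.2 ⟨0, Nat.succ_pos _⟩ ⟨i + 1, hi⟩ (Nat.succ_pos i)
        have h6 : T ⟨⟨i+1, hi⟩, ⟨0, (consComp a β).one_le_blocksFun ⟨i+1, hi⟩⟩⟩ = z a k := hc
        rw [h6] at h5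
        exact absurd h5 (notlt _)
      | succ j =>
        have h5 := hT.1 ⟨i+1, hi⟩ ⟨0, (consComp a β).one_le_blocksFun ⟨i+1, hi⟩⟩
          ⟨j + 1, hj⟩ (Nat.succ_pos j)
        rw [hc] at h5
        exact absurd h5 (notlt _)
  -- all other entries are nonzero
  have hne : ∀ (i : ℕ) (hi : i < (consComp a β).length) (jv : ℕ)
      (hj : jv < (consComp a β).blocksFun ⟨i, hi⟩), ¬(i = 0 ∧ jv = 0) →
      (T ⟨⟨i, hi⟩, ⟨jv, hj⟩⟩).val ≠ 0 := by
    intro i hi jv hj hnz h0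
    have hz' : T ⟨⟨i, hi⟩, ⟨jv, hj⟩⟩ = z a k := Fin.ext (by simpa [z] using h0)
    have h2 := T.injective (hz'.trans h00.symm)
    exact hnz (cell_inj h2)
  -- the set of (shifted) entries of the first row
  have ha1 : ∀ j : Fin a, j.val + 1 < a + 1 := fun j => Nat.succ_lt_succ j.isLt
  have helt : ∀ j : Fin a, (T (rowCell (j.val + 1) (ha1 j))).val - 1 < a + k := by
    intro j
    have h1 := (T (rowCell (j.val + 1) (ha1 j))).isLt
    have h2 := j.isLt
    omega
  set e : Fin a → Fin (a + k) :=
    fun j => ⟨(T (rowCell (j.val + 1) (ha1 j))).val - 1, helt j⟩ with he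
  have emono : StrictMono e := by
    intro j j' hjj
    have h5 := hT.1 ⟨0, Nat.succ_pos _⟩ ⟨j.val + 1, ha1 j⟩ ⟨j'.val + 1, ha1 j'⟩
      (Nat.succ_lt_succ hjj)
    have h6 : (T (rowCell (j.val + 1) (ha1 j))).val ≠ 0 :=
      hne 0 (Nat.succ_pos _) (j.val + 1) (ha1 j) (by omega)
    have h5' : (T (rowCell (j.val + 1) (ha1 j))).val <
        (T (rowCell (j'.val + 1) (ha1 j'))).val := h5
    show ((T (rowCell (j.val + 1) (ha1 j))).val - 1 : ℕ) <
        (T (rowCell (j'.val + 1) (ha1 j'))).val - 1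
    omega
  set S : Finset (Fin (a + k)) := Finset.image e Finset.univ with hSdef
  have hS : S.card = a := by
    rw [hSdef, Finset.card_image_of_injective _ emono.injective, Finset.card_univ,
      Fintype.card_fin]
  -- the (shifted) entries of the lower rows
  have hult : ∀ c : ImmaculateCells β, (T (liftCell c)).val - 1 < a + k := by
    intro c
    have h1 := (T (liftCell c)).isLt
    have h2 : (T (liftCell c)).val ≠ 0 :=
      hne (c.1.val + 1) (Nat.succ_lt_succ c.1.isLt) c.2.val c.2.isLt (by omega)
    omega
  have humem : ∀ c : ImmaculateCells β,
      (⟨(T (liftCell c)).val - 1, hult c⟩ : Fin (a + k)) ∈ Sᶜ := by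
    intro c
    rw [Finset.mem_compl]
    intro hmem
    obtain ⟨j, _, hj⟩ := Finset.mem_image.1 hmem
    have h6 : (T (rowCell (j.val + 1) (ha1 j))).val ≠ 0 :=
      hne 0 (Nat.succ_pos _) (j.val + 1) (ha1 j) (by omega)
    have h7 : (T (liftCell c)).val ≠ 0 :=
      hne (c.1.val + 1) (Nat.succ_lt_succ c.1.isLt) c.2.val c.2.isLt (by omega)
    have hval : (T (rowCell (j.val + 1) (ha1 j))).val - 1 = (T (liftCell c)).val - 1 :=
      congrArg Fin.val hj
    have h5 : T (rowCell (j.val + 1) (ha1 j)) = T (liftCell c) := by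
      apply Fin.ext
      omega
    have h8 := (cell_inj (T.injective h5)).1
    omega
  have hlne : ∀ c : ImmaculateCells β, (T (liftCell c)).val ≠ 0 := fun c =>
    hne (c.1.val + 1) (Nat.succ_lt_succ c.1.isLt) c.2.val c.2.isLt (by omega)
  set τiso := (Sᶜ).orderIsoOfFin (compl_card S hS) with hτiso
  set T'fun : ImmaculateCells β → Fin k :=
    fun c => τiso.symm ⟨⟨(T (liftCell c)).val - 1, hult c⟩, humem c⟩ with hT'fun
  have hlift_inj : ∀ c c' : ImmaculateCells β, T (liftCell c) = T (liftCell c') → c = c' := by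
    intro c c' h
    have h2 := T.injective h
    obtain ⟨⟨i, hi⟩, ⟨jv, hj⟩⟩ := c
    obtain ⟨⟨i', hi'⟩, ⟨jv', hj'⟩⟩ := c'
    have hjα : jv < (consComp a β).blocksFun ⟨i + 1, Nat.succ_lt_succ hi⟩ := hj
    have hjα' : jv' < (consComp a β).blocksFun ⟨i' + 1, Nat.succ_lt_succ hi'⟩ := hj'
    have h2' : (⟨⟨i + 1, Nat.succ_lt_succ hi⟩, ⟨jv, hjα⟩⟩ :
        ImmaculateCells (consComp a β)) = ⟨⟨i' + 1, Nat.succ_lt_succ hi'⟩, ⟨jv', hjα'⟩⟩ := h2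
    obtain ⟨h3, h4⟩ := Sigma.mk.inj_iff.1 h2'
    have hii : i = i' := by simpa [Fin.ext_iff] using h3
    subst hii
    have hjj : jv = jv' := by simpa [Fin.ext_iff] using eq_of_heq h4
    subst hjj
    rfl
  have hT'inj : Function.Injective T'fun := by
    intro c c' h
    have h2 := τiso.symm.injective h
    have h4 : (T (liftCell c)).val - 1 = (T (liftCell c')).val - 1 :=
      congrArg Fin.val (congrArg Subtype.val h2)
    have h5 := hlne c
    have h6 := hlne c'
    exact hlift_inj c c' (Fin.ext (by omega))
  have hT'bij : Function.Bijective T'fun :=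
    (Fintype.bijective_iff_injective_and_card _).2
      ⟨hT'inj, by rw [card_cells, Fintype.card_fin]⟩
  have hsit : IsStandardImmaculate β (Equiv.ofBijective T'fun hT'bij) := by
    constructor
    · intro i j j' hlt
      show T'fun ⟨i, j⟩ < T'fun ⟨i, j'⟩
      apply (OrderIso.lt_iff_lt τiso.symm).2
      apply Subtype.mk_lt_mk.2
      apply Fin.mk_lt_mk.2
      have h5 := hT.1 ⟨i.val + 1, Nat.succ_lt_succ i.isLt⟩ ⟨j.val, j.isLt⟩
        ⟨j'.val, j'.isLt⟩ hlt
      have h6 : (T (liftCell ⟨i, j⟩)).val < (T (liftCell ⟨i, j'⟩)).val := h5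
      have h7 := hlne ⟨i, j⟩
      omega
    · intro i i' hlt
      show T'fun ⟨i, _⟩ < T'fun ⟨i', _⟩
      apply (OrderIso.lt_iff_lt τiso.symm).2
      apply Subtype.mk_lt_mk.2
      apply Fin.mk_lt_mk.2
      have h5 := hT.2 ⟨i.val + 1, Nat.succ_lt_succ i.isLt⟩
        ⟨i'.val + 1, Nat.succ_lt_succ i'.isLt⟩ (Nat.succ_lt_succ hlt)
      have h6 : (T (liftCell ⟨i, ⟨0, β.one_le_blocksFun i⟩⟩)).val <
          (T (liftCell ⟨i', ⟨0, β.one_le_blocksFun i'⟩⟩)).val := h5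
      have h7 := hlne ⟨i, ⟨0, β.one_le_blocksFun i⟩⟩
      omega
  have horder : ∀ x : Fin a, S.orderEmbOfFin hS x = e x := by
    have h := Finset.orderEmbOfFin_unique hS (f := e)
      (fun x => Finset.mem_image_of_mem e (Finset.mem_univ x)) emono
    exact fun x => (congrFun h x).symm
  have hiota : ∀ j : Fin a, iota a k (e j) = T (rowCell (j.val + 1) (ha1 j)) := by
    intro j
    apply Fin.ext
    have h6 : (T (rowCell (j.val + 1) (ha1 j))).val ≠ 0 :=
      hne 0 (Nat.succ_pos _) (j.val + 1) (ha1 j) (by omega)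
    show (T (rowCell (j.val + 1) (ha1 j))).val - 1 + 1 = _
    omega
  have hiota2 : ∀ c : ImmaculateCells β,
      iota a k ⟨(T (liftCell c)).val - 1, hult c⟩ = T (liftCell c) := by
    intro c
    apply Fin.ext
    have h6 := hlne c
    show (T (liftCell c)).val - 1 + 1 = _
    omega
  have hτe : ∀ x : {y : Fin (a + k) // y ∈ Sᶜ},
      (Sᶜ).orderEmbOfFin (compl_card S hS) (τiso.symm x) = x.val := by
    intro x
    rw [← Finset.coe_orderIsoOfFin_apply, ← hτiso, OrderIso.apply_symm_apply]
  refine ⟨⟨⟨S, hS⟩, ⟨Equiv.ofBijective T'fun hT'bij, hsit⟩⟩, ?_⟩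
  apply Subtype.ext
  apply Equiv.ext
  rintro ⟨⟨i, hi⟩, ⟨jv, hj⟩⟩
  show fwd S hS (Equiv.ofBijective T'fun hT'bij) ⟨⟨i, hi⟩, ⟨jv, hj⟩⟩ = T ⟨⟨i, hi⟩, ⟨jv, hj⟩⟩
  cases i with
  | zero =>
    cases jv with
    | zero =>
      erw [fwd_zero]
      exact h00.symm
    | succ j =>
      erw [fwd_row0, horder]
      exact hiota ⟨j, Nat.lt_of_succ_lt_succ hj⟩
  | succ i =>
    erw [fwd_row]
    show iota a k ((Sᶜ).orderEmbOfFin (compl_card S hS)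
      (T'fun ⟨⟨i, Nat.lt_of_succ_lt_succ hi⟩, ⟨jv, hj⟩⟩)) = _
    rw [hT'fun]
    rw [hτe]
    exact hiota2 ⟨⟨i, Nat.lt_of_succ_lt_succ hi⟩, ⟨jv, hj⟩⟩

lemma g_consComp (a k : ℕ) (β : Composition k) :
    g (consComp a β) = (a + k).choose a * g β := by
  have hbij : Function.Bijective (phi a k β) := ⟨phi_injective, phi_surjective⟩
  have h := Nat.card_eq_of_bijective _ hbij
  rw [Nat.card_prod] at h
  show Nat.card _ = _
  rw [← h]
  congr 1
  rw [Nat.card_eq_fintype_card, Fintype.card_finset_len, Fintype.card_fin]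

lemma g_eq_of_blocks_eq {n n' : ℕ} (γ : Composition n) (γ' : Composition n')
    (hn : n = n') (hb : γ.blocks = γ'.blocks) : g γ = g γ' := by
  subst hn
  have : γ = γ' := Composition.ext hb
  subst this
  rfl

def backComp (n : ℕ) (x : Σ a : Fin (n + 1), Composition (n - a.val)) : Composition (n + 1) :=
  ⟨(x.1.val + 1) :: x.2.blocks, by
    intro i hi
    rcases List.mem_cons.1 hi with h | h
    · omega
    · exact x.2.blocks_pos h, by
    have h1 := x.2.blocks_sum
    have h2 := x.1.isLt
    simp only [List.sum_cons, h1]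
    omega⟩

lemma backComp_bijective (n : ℕ) : Function.Bijective (backComp n) := by
  constructor
  · rintro ⟨a, β⟩ ⟨a', β'⟩ h
    have hb : (a.val + 1) :: β.blocks = (a'.val + 1) :: β'.blocks :=
      congrArg Composition.blocks h
    obtain ⟨h1, h2⟩ := List.cons.inj hb
    have haa : a = a' := Fin.ext (by omega)
    subst haa
    have : β = β' := Composition.ext h2
    subst this
    rfl
  · intro γ
    obtain ⟨blocks, pos, hsum⟩ := γ
    match blocks, hsum with
    | [], hsum => simp at hsum
    | b :: t, hsum =>
      have hb : 0 < b := pos List.mem_cons_self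
      have hsum' : b + t.sum = n + 1 := by
        simpa only [List.sum_cons] using hsum
      have hb2 : b - 1 < n + 1 := by omega
      have hts : t.sum = n - (⟨b - 1, hb2⟩ : Fin (n + 1)).val := by
        show t.sum = n - (b - 1)
        omega
      refine ⟨⟨⟨b - 1, hb2⟩, ⟨t, fun hi => pos (List.mem_cons_of_mem _ hi), hts⟩⟩, ?_⟩
      apply Composition.ext
      show (b - 1 + 1) :: t = b :: t
      congr 1
      omega

/-- For every positive integer `n`,
`∑_{α ⊨ n+1} (g^α)² = ∑_{k=0}^{n} C(n, k)² ⬝ ∑_{β ⊨ k} (g^β)²`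
(the inner sum for `k = 0` being `1`, coming from the empty composition and the
empty tableau). -/
theorem sum_sq_standard_immaculate_succ_recurrence (n : ℕ) (hn : 0 < n) :
    ∑ α : Composition (n + 1), (g α) ^ 2 =
      ∑ k ∈ Finset.range (n + 1),
        (Nat.choose n k) ^ 2 * ∑ β : Composition k, (g β) ^ 2 := by
  classical
  have hsum := Fintype.sum_bijective (backComp n) (backComp_bijective n)
    (fun x => g (backComp n x) ^ 2) (fun γ => g γ ^ 2) (fun x => rfl)
  rw [← hsum, ← Finset.univ_sigma_univ, Finset.sum_sigma]
  have hg : ∀ (a : Fin (n + 1)) (β : Composition (n - a.val)),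
      g (backComp n ⟨a, β⟩) = n.choose a.val * g β := by
    intro a β
    have h1 : g (backComp n ⟨a, β⟩) = g (consComp a.val β) := by
      apply g_eq_of_blocks_eq
      · have := a.isLt; omega
      · rfl
    rw [h1, g_consComp, show a.val + (n - a.val) = n from by have := a.isLt; omega]
  have step : ∀ a : Fin (n + 1),
      ∑ β : Composition (n - a.val), g (backComp n ⟨a, β⟩) ^ 2
        = (fun t => (n.choose t) ^ 2 * ∑ β : Composition (n - t), g β ^ 2) a.val := by
    intro a
    show _ = (n.choose a.val) ^ 2 * ∑ β : Composition (n - a.val), g β ^ 2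
    rw [Finset.mul_sum]
    apply Finset.sum_congr rfl
    intro β _
    rw [hg a β, mul_pow]
  rw [Finset.sum_congr rfl (fun a _ => step a)]
  rw [Fin.sum_univ_eq_sum_range (fun t => (n.choose t) ^ 2 *
    ∑ β : Composition (n - t), g β ^ 2) (n + 1)]
  rw [← Finset.sum_range_reflect]
  apply Finset.sum_congr rfl
  intro j hj
  have hj' : j ≤ n := Nat.lt_succ_iff.1 (Finset.mem_range.1 hj)
  show (n.choose (n + 1 - 1 - j)) ^ 2 * ∑ β : Composition (n - (n + 1 - 1 - j)), g β ^ 2 = _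
  have h1 : n + 1 - 1 - j = n - j := by omega
  rw [h1]
  have h2 : n - (n - j) = j := by omega
  rw [h2, Nat.choose_symm hj']
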